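/- Let (k₁, k₂, k₃) = (2, 2, 3), w₁ = (x⁻¹, 0, 0, 0, 0, (3/2)·x⁻²) and w₂ = (0, x⁻², x⁻¹, (2/3)·x⁻², −(4/3)·x⁻³, 0) (components in the order (a₁₂, a₁₃, a₂₃, b₁, b₂, b₃)). Then E′(w₁), F′(w₁), E′(w₂), F′(w₂) ∈ B; whenever α·w₁ + β·w₂ ∈ B for α, β ∈ ℂ one has α = β = 0; and every z ∈ V with E′(z) ∈ B and F′(z) ∈ B lies in ℂ·w₁ + ℂ·w₂ + B. In other words, the 𝔰′-invariant part of H¹(ℂℙ¹, T₂) is two-dimensional with basis the classes of w₁ and w₂. -/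

import Mathlib

noncomputable section

open LaurentPolynomial

/-- `L = ℂ[x, x⁻¹]`, the Laurent polynomials over `ℂ`. -/
abbrev L : Type := LaurentPolynomial ℂ

/-- The coefficient of `x^n` in a Laurent polynomial. -/
def coeffL (p : L) (n : ℤ) : ℂ := (AddMonoidAlgebra.coeff p) n

lemma coeffL_zero (n : ℤ) : coeffL 0 n = 0 := by
  unfold coeffL; simp

lemma coeffL_add (a b : L) (n : ℤ) : coeffL (a + b) n = coeffL a n + coeffL b n := by
  unfold coeffL; simp

lemma coeffL_smul (c : ℂ) (a : L) (n : ℤ) : coeffL (c • a) n = c * coeffL a n := by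
  unfold coeffL; simp

/-- `L₊`: Laurent polynomials involving only nonnegative powers of `x`. -/
def Lplus : Submodule ℂ L where
  carrier := {p | ∀ n : ℤ, n < 0 → coeffL p n = 0}
  zero_mem' := fun n _ => coeffL_zero n
  add_mem' := by intro a b ha hb n hn; rw [coeffL_add, ha n hn, hb n hn, add_zero]
  smul_mem' := by intro c p hp n hn; rw [coeffL_smul, hp n hn, mul_zero]

/-- `L₋`: Laurent polynomials involving only nonpositive powers of `x`. -/
def Lminus : Submodule ℂ L where
  carrier := {p | ∀ n : ℤ, 0 < n → coeffL p n = 0}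
  zero_mem' := fun n _ => coeffL_zero n
  add_mem' := by intro a b ha hb n hn; rw [coeffL_add, ha n hn, hb n hn, add_zero]
  smul_mem' := by intro c p hp n hn; rw [coeffL_smul, hp n hn, mul_zero]

/-- The derivative `d/dx` on Laurent polynomials. -/
def D (p : L) : L := Finsupp.sum (AddMonoidAlgebra.coeff p) fun n a => ((n : ℂ) * a) • T (n - 1)

/-- `V = L⁶`, the model of Čech 1-cochains with values in `T₂`: a tuple
`v = (a₁₂, a₁₃, a₂₃, b₁, b₂, b₃)` (components `v 0, …, v 5`) encodes the
vector field `Σ_{i<j} a_{ij}(x)ξᵢξⱼ∂/∂x + Σ_t b_t(x)ξ₁ξ₂ξ₃∂/∂ξ_t` on `U₀ ∩ U₁`. -/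
abbrev V : Type := Fin 6 → L

/-- `B₀ = (L₊)⁶`: cochains holomorphic in `U₀`. -/
def B0 : Submodule ℂ V := Submodule.pi Set.univ fun _ => Lplus

/-- The linear map `v ↦ x^m · (v i)`. -/
def cndA (m : ℤ) (i : Fin 6) : V →ₗ[ℂ] L :=
  (LinearMap.mulLeft ℂ (T m)).comp (LinearMap.proj i)

/-- The linear map `v ↦ x^m · (v i − c·x⁻¹·(v j))`. -/
def cndB (m : ℤ) (c : ℂ) (i j : Fin 6) : V →ₗ[ℂ] L :=
  (LinearMap.mulLeft ℂ (T m)).comp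
    (LinearMap.proj i - c • (LinearMap.mulLeft ℂ (T (-1))).comp (LinearMap.proj j))

/-- `B₁`: cochains holomorphic in `U₁`, i.e. `v` with
`x^(kᵢ+kⱼ−2)·a_{ij} ∈ L₋` for all `i < j` and
`x^(d−k_t)·(b_t − σ_t·k_t·x⁻¹·a_{(t)}) ∈ L₋` for `t = 1, 2, 3`
(σ₁ = 1, σ₂ = −1, σ₃ = 1, a₍₁₎ = a₂₃, a₍₂₎ = a₁₃, a₍₃₎ = a₁₂, d = k₁+k₂+k₃). -/
def B1 (k1 k2 k3 : ℤ) : Submodule ℂ V :=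
  Lminus.comap (cndA (k1 + k2 - 2) 0) ⊓
  Lminus.comap (cndA (k1 + k3 - 2) 1) ⊓
  Lminus.comap (cndA (k2 + k3 - 2) 2) ⊓
  Lminus.comap (cndB (k2 + k3) ((k1 : ℂ)) 3 2) ⊓
  Lminus.comap (cndB (k1 + k3) (-(k2 : ℂ)) 4 1) ⊓
  Lminus.comap (cndB (k1 + k2) ((k3 : ℂ)) 5 0)

/-- The coboundary subspace `B = B₀ + B₁`. -/
def B (k1 k2 k3 : ℤ) : Submodule ℂ V := B0 ⊔ B1 k1 k2 k3

/-- Action of `e = ∂/∂x` on cocycles: the componentwise derivative. -/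
def Eop : V → V := fun v i => D (v i)

/-- Action of `f = ∂/∂y` on cocycles, with components
`a_{ij} ↦ (2 − kᵢ − kⱼ)·x·a_{ij} − x²·a_{ij}′` and
`b_t ↦ σ_t·k_t·a₍ₜ₎ − (d − k_t)·x·b_t − x²·b_t′`. -/
def Fop (k1 k2 k3 : ℤ) : V → V := fun v =>
  ![((2 - k1 - k2 : ℤ) : ℂ) • (T 1 * v 0) - T 2 * D (v 0),
    ((2 - k1 - k3 : ℤ) : ℂ) • (T 1 * v 1) - T 2 * D (v 1),
    ((2 - k2 - k3 : ℤ) : ℂ) • (T 1 * v 2) - T 2 * D (v 2),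
    (k1 : ℂ) • v 2 - ((k2 + k3 : ℤ) : ℂ) • (T 1 * v 3) - T 2 * D (v 3),
    -((k2 : ℂ) • v 1) - ((k1 + k3 : ℤ) : ℂ) • (T 1 * v 4) - T 2 * D (v 4),
    (k3 : ℂ) • v 0 - ((k1 + k2 : ℤ) : ℂ) • (T 1 * v 5) - T 2 * D (v 5)]

/-- `N(v) = (0, 0, a₁₃, −b₂, 0, 0)`; `e′ = ∂/∂x + ξ₂∂/∂ξ₁` acts by `E′ = E + N`. -/
def Nop : V → V := fun v => ![0, 0, v 1, -v 4, 0, 0]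

/-- `M(v) = (0, a₂₃, 0, 0, −b₁, 0)`; `f′ = ∂/∂y + η₁∂/∂η₂` acts by `F′ = F + M`. -/
def Mop : V → V := fun v => ![0, v 2, 0, 0, -v 3, 0]

/-- The action `E′ = E + N` of `e′ = ∂/∂x + ξ₂∂/∂ξ₁`. -/
def E'op : V → V := fun v => Eop v + Nop v

/-- The action `F′ = F + M` of `f′ = ∂/∂y + η₁∂/∂η₂`. -/
def F'op (k1 k2 k3 : ℤ) : V → V := fun v => Fop k1 k2 k3 v + Mop v

/-- `N″(v) = (0, a₁₂, a₁₃, −b₂, −b₃, 0)`;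
`e″ = ∂/∂x + ξ₂∂/∂ξ₁ + ξ₃∂/∂ξ₂` acts by `E″ = E + N″`. -/
def N''op : V → V := fun v => ![0, v 0, v 1, -v 4, -v 5, 0]

/-- `M″(v) = (2a₁₃, 2a₂₃, 0, 0, −2b₁, −2b₂)`;
`f″ = ∂/∂y + 2η₁∂/∂η₂ + 2η₂∂/∂η₃` acts by `F″ = F + M″`. -/
def M''op : V → V := fun v => ![(2 : ℂ) • v 1, (2 : ℂ) • v 2, 0, 0, -((2 : ℂ) • v 3), -((2 : ℂ) • v 4)]

/-- The action `E″ = E + N″` of `e″`. -/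
def E''op : V → V := fun v => Eop v + N''op v

/-- The action `F″ = F + M″` of `f″`. -/
def F''op (k1 k2 k3 : ℤ) : V → V := fun v => Fop k1 k2 k3 v + M''op v

/-!
Adding an element of `B₀` only changes terms of nonnegative degree, so whether `v ∈ B` depends
only on the principal parts (terms of negative degree) of the components of `v`. When every
`kᵢ + kⱼ ≥ 3`, the conditions defining `B₁` may themselves be checked on principal parts: the
only coefficient lost by truncation is the constant term of some `a_{ij}`, which these conditions
already force to vanish. For `(k₁, k₂, k₃) = (2, 2, 3)` membership in `B` thus becomes sixteen
linear conditions on Laurent coefficients, and `E′ z ∈ B`, `F′ z ∈ B` become a linear system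
on the principal parts of `z` whose solutions modulo `B` are spanned by `w₁` and `w₂`, with
coordinates the `x⁻¹`-coefficients of `a₁₂` and `a₂₃`.
-/

lemma coeffL_neg (p : L) (n : ℤ) : coeffL (-p) n = -coeffL p n := by
  simp [coeffL]

lemma coeffL_sub (p q : L) (n : ℤ) : coeffL (p - q) n = coeffL p n - coeffL q n := by
  simp [coeffL]

lemma coeffL_T (m n : ℤ) : coeffL (T m) n = if m = n then 1 else 0 :=
  T_apply n m

lemma coeffL_T_mul (m : ℤ) (p : L) (n : ℤ) : coeffL (T m * p) n = coeffL p (n - m) := by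
  rw [coeffL, T, AddMonoidAlgebra.coeff_single_mul_apply, one_mul, neg_add_eq_sub]; rfl

lemma coeffL_D (p : L) (n : ℤ) : coeffL (D p) n = (n + 1) * coeffL p (n + 1) := by
  have hmonomial (m : ℤ) (a : ℂ) : coeffL (((m : ℂ) * a) • T (m - 1)) n =
      if n + 1 = m then (m : ℂ) * a else 0 := by
    rw [coeffL_smul, coeffL_T]
    split_ifs <;> first | omega | simp
  rw [D, coeffL, AddMonoidAlgebra.coeff_finsuppSum, Finsupp.sum_apply]
  simp only [coeffL] at hmonomial
  rw [Finsupp.sum, Finset.sum_congr rfl fun m _ => hmonomial m _, Finset.sum_ite_eq]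
  split_ifs with h
  · push_cast; rfl
  · rw [coeffL, Finsupp.notMem_support_iff.mp h, mul_zero]

def principalPart (p : L) : L :=
  AddMonoidAlgebra.ofCoeff ((AddMonoidAlgebra.coeff p).filter (· < 0))

lemma coeffL_principalPart (p : L) (n : ℤ) :
    coeffL (principalPart p) n = if n < 0 then coeffL p n else 0 :=
  Finsupp.filter_apply ..

lemma sub_principalPart_mem_Lplus (p : L) : p - principalPart p ∈ Lplus := by
  intro n hn
  rw [coeffL_sub, coeffL_principalPart, if_pos hn, sub_self]

lemma principalPart_add_of_mem_Lplus {p : L} (hp : p ∈ Lplus) (q : L) :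
    principalPart (p + q) = principalPart q := by
  ext n
  change coeffL _ n = coeffL _ n
  simp only [coeffL_principalPart, coeffL_add]
  split_ifs with hn
  · rw [hp n hn, zero_add]
  · rfl

section Coboundaries

variable {m : ℤ} {c : ℂ} {i j : Fin 6} {v : V}

lemma mem_comap_cndA_iff :
    v ∈ Lminus.comap (cndA m i) ↔ ∀ n, -m < n → coeffL (v i) n = 0 := by
  refine ⟨fun h n hn => ?_, fun h n hn => ?_⟩
  · simpa [cndA, coeffL_T_mul, -T_mul] using h (n + m) (by omega)
  · simpa [cndA, coeffL_T_mul, -T_mul] using h (n - m) (by omega)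

lemma mem_comap_cndB_iff :
    v ∈ Lminus.comap (cndB m c i j) ↔
      ∀ n, -m < n → coeffL (v i) n = c * coeffL (v j) (n + 1) := by
  have hcoeff (n : ℤ) : coeffL (cndB m c i j v) (n + m) =
      coeffL (v i) n - c * coeffL (v j) (n + 1) := by
    simp [cndB, coeffL_T_mul, coeffL_sub, coeffL_smul, -T_mul]
  refine ⟨fun h n hn => ?_, fun h n hn => ?_⟩
  · rw [← sub_eq_zero, ← hcoeff]
    exact h _ (by omega)
  · rw [show n = n - m + m by ring, hcoeff, h _ (by omega), sub_self]

lemma principalPart_mem_comap_cndA (hv : v ∈ Lminus.comap (cndA m i)) :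
    (fun k => principalPart (v k)) ∈ Lminus.comap (cndA m i) := by
  rw [mem_comap_cndA_iff] at hv ⊢
  intro n hn
  rw [coeffL_principalPart, hv n hn, ite_self]

lemma principalPart_mem_comap_cndB {m' : ℤ} (hm' : 0 < m') (hj : v ∈ Lminus.comap (cndA m' j))
    (hv : v ∈ Lminus.comap (cndB m c i j)) :
    (fun k => principalPart (v k)) ∈ Lminus.comap (cndB m c i j) := by
  rw [mem_comap_cndA_iff] at hj
  rw [mem_comap_cndB_iff] at hv ⊢
  intro n hn
  simp only [coeffL_principalPart]
  split_ifs with hn0 hn1 hn1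
  · exact hv n hn
  · rw [hv n hn, hj (n + 1) (by omega)]
  · omega
  · rw [mul_zero]

lemma principalPart_mem_comap_cndA_iff :
    (fun k => principalPart (v k)) ∈ Lminus.comap (cndA m i) ↔
      ∀ n ∈ Finset.Ioo (-m) 0, coeffL (v i) n = 0 := by
  rw [mem_comap_cndA_iff]
  refine forall_congr' fun n => ?_
  rw [coeffL_principalPart, Finset.mem_Ioo]
  by_cases hn : n < 0 <;> simp [hn]

lemma principalPart_mem_comap_cndB_iff :
    (fun k => principalPart (v k)) ∈ Lminus.comap (cndB m c i j) ↔
      ∀ n ∈ Finset.Ioo (-m) 0, coeffL (v i) n = c * coeffL (principalPart (v j)) (n + 1) := by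
  rw [mem_comap_cndB_iff]
  refine forall_congr' fun n => ?_
  rw [coeffL_principalPart, coeffL_principalPart, Finset.mem_Ioo]
  by_cases hn : n < 0
  · simp [hn]
  · simp [hn, show ¬ n + 1 < 0 by omega]

end Coboundaries

lemma mem_B1_iff {k1 k2 k3 : ℤ} {v : V} : v ∈ B1 k1 k2 k3 ↔
    ((v ∈ Lminus.comap (cndA (k1 + k2 - 2) 0) ∧ v ∈ Lminus.comap (cndA (k1 + k3 - 2) 1) ∧
      v ∈ Lminus.comap (cndA (k2 + k3 - 2) 2)) ∧
     v ∈ Lminus.comap (cndB (k2 + k3) (k1 : ℂ) 3 2) ∧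
     v ∈ Lminus.comap (cndB (k1 + k3) (-(k2 : ℂ)) 4 1) ∧
     v ∈ Lminus.comap (cndB (k1 + k2) (k3 : ℂ) 5 0)) := by
  simp only [B1, Submodule.mem_inf, and_assoc]

theorem mem_B_iff_principalPart_mem_B1 {k1 k2 k3 : ℤ} (h12 : 2 < k1 + k2) (h13 : 2 < k1 + k3)
    (h23 : 2 < k2 + k3) (v : V) :
    v ∈ B k1 k2 k3 ↔ (fun i => principalPart (v i)) ∈ B1 k1 k2 k3 := by
  constructor
  · intro hv
    obtain ⟨y, hy, u, hu, rfl⟩ := Submodule.mem_sup.mp hv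
    have hpp : (fun i => principalPart ((y + u) i)) = fun i => principalPart (u i) :=
      funext fun i => principalPart_add_of_mem_Lplus (hy i (Set.mem_univ i)) (u i)
    rw [hpp]
    obtain ⟨⟨h0, h1, h2⟩, h3, h4, h5⟩ := mem_B1_iff.mp hu
    exact mem_B1_iff.mpr
      ⟨⟨principalPart_mem_comap_cndA h0, principalPart_mem_comap_cndA h1,
        principalPart_mem_comap_cndA h2⟩,
       principalPart_mem_comap_cndB (by omega) h2 h3,
       principalPart_mem_comap_cndB (by omega) h1 h4,
       principalPart_mem_comap_cndB (by omega) h0 h5⟩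
  · intro hv
    refine Submodule.mem_sup.mpr ⟨_, ?_, _, hv, sub_add_cancel v _⟩
    exact Submodule.mem_pi.mpr fun i _ => sub_principalPart_mem_Lplus (v i)

theorem mem_B_two_two_three_iff (v : V) : v ∈ B 2 2 3 ↔
    coeffL (v 0) (-1) = 0 ∧
    coeffL (v 1) (-2) = 0 ∧ coeffL (v 1) (-1) = 0 ∧
    coeffL (v 2) (-2) = 0 ∧ coeffL (v 2) (-1) = 0 ∧
    coeffL (v 3) (-4) = 2 * coeffL (v 2) (-3) ∧ coeffL (v 3) (-3) = 2 * coeffL (v 2) (-2) ∧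
      coeffL (v 3) (-2) = 2 * coeffL (v 2) (-1) ∧ coeffL (v 3) (-1) = 0 ∧
    coeffL (v 4) (-4) = -(2 * coeffL (v 1) (-3)) ∧ coeffL (v 4) (-3) = -(2 * coeffL (v 1) (-2)) ∧
      coeffL (v 4) (-2) = -(2 * coeffL (v 1) (-1)) ∧ coeffL (v 4) (-1) = 0 ∧
    coeffL (v 5) (-3) = 3 * coeffL (v 0) (-2) ∧ coeffL (v 5) (-2) = 3 * coeffL (v 0) (-1) ∧
      coeffL (v 5) (-1) = 0 := by
  rw [mem_B_iff_principalPart_mem_B1 (by norm_num) (by norm_num) (by norm_num), mem_B1_iff]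
  simp only [principalPart_mem_comap_cndA_iff, principalPart_mem_comap_cndB_iff]
  norm_num [show Finset.Ioo (-2 : ℤ) 0 = {-1} by decide,
    show Finset.Ioo (-3 : ℤ) 0 = {-2, -1} by decide,
    show Finset.Ioo (-4 : ℤ) 0 = {-3, -2, -1} by decide,
    show Finset.Ioo (-5 : ℤ) 0 = {-4, -3, -2, -1} by decide, coeffL_principalPart, and_assoc]

def IsInvariantMod (k1 k2 k3 : ℤ) (z : V) : Prop :=
  E'op z ∈ B k1 k2 k3 ∧ F'op k1 k2 k3 z ∈ B k1 k2 k3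

def w₁ : V := ![T (-1), 0, 0, 0, 0, (3 / 2 : ℂ) • T (-2)]

def w₂ : V := ![0, T (-2), T (-1), (2 / 3 : ℂ) • T (-2), -((4 / 3 : ℂ) • T (-3)), 0]

lemma isInvariantMod_w₁ : IsInvariantMod 2 2 3 w₁ := by
  simp only [IsInvariantMod, mem_B_two_two_three_iff, w₁, E'op, Eop, Nop, F'op, Fop, Mop,
    Pi.add_apply, Matrix.cons_val, coeffL_add, coeffL_sub, coeffL_neg, coeffL_smul, coeffL_T_mul,
    coeffL_D, coeffL_T, coeffL_zero]
  norm_num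

lemma isInvariantMod_w₂ : IsInvariantMod 2 2 3 w₂ := by
  simp only [IsInvariantMod, mem_B_two_two_three_iff, w₂, E'op, Eop, Nop, F'op, Fop, Mop,
    Pi.add_apply, Matrix.cons_val, coeffL_add, coeffL_sub, coeffL_neg, coeffL_smul, coeffL_T_mul,
    coeffL_D, coeffL_T, coeffL_zero]
  norm_num

lemma eq_zero_of_smul_w₁_add_smul_w₂_mem_B {α β : ℂ} (h : α • w₁ + β • w₂ ∈ B 2 2 3) :
    α = 0 ∧ β = 0 := by
  simp only [mem_B_two_two_three_iff, w₁, w₂, Pi.add_apply, Pi.smul_apply, Matrix.cons_val,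
    coeffL_add, coeffL_smul, coeffL_T, coeffL_zero] at h
  norm_num at h
  exact ⟨h.1, h.2.1⟩

lemma sub_smul_w₁_add_smul_w₂_mem_B {z : V} (hz : IsInvariantMod 2 2 3 z) :
    z - (coeffL (z 0) (-1) • w₁ + coeffL (z 2) (-1) • w₂) ∈ B 2 2 3 := by
  obtain ⟨hE, hF⟩ := hz
  simp only [mem_B_two_two_three_iff, w₁, w₂, E'op, Eop, Nop, F'op, Fop, Mop, Pi.add_apply,
    Pi.sub_apply, Pi.smul_apply, Matrix.cons_val, coeffL_add, coeffL_sub, coeffL_neg, coeffL_smul,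
    coeffL_T_mul, coeffL_D, coeffL_T, coeffL_zero] at hE hF ⊢
  norm_num at hE hF ⊢
  grind

/-- For `(k₁, k₂, k₃) = (2, 2, 3)`, the 𝔰′-invariant part of `H¹(ℂℙ¹, T₂)` is
two-dimensional, with basis the classes of
`w₁ = (x⁻¹, 0, 0, 0, 0, (3/2)x⁻²)` and `w₂ = (0, x⁻², x⁻¹, (2/3)x⁻², −(4/3)x⁻³, 0)`. -/
theorem stmt_8 (w1 w2 : V)
    (hw1 : w1 = ![T (-1), 0, 0, 0, 0, (3 / 2 : ℂ) • T (-2)])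
    (hw2 : w2 = ![0, T (-2), T (-1), (2 / 3 : ℂ) • T (-2), -((4 / 3 : ℂ) • T (-3)), 0]) :
    (E'op w1 ∈ B 2 2 3 ∧ F'op 2 2 3 w1 ∈ B 2 2 3 ∧
     E'op w2 ∈ B 2 2 3 ∧ F'op 2 2 3 w2 ∈ B 2 2 3) ∧
    (∀ α β : ℂ, α • w1 + β • w2 ∈ B 2 2 3 → α = 0 ∧ β = 0) ∧
    (∀ z : V, E'op z ∈ B 2 2 3 → F'op 2 2 3 z ∈ B 2 2 3 →
      ∃ α β : ℂ, z - (α • w1 + β • w2) ∈ B 2 2 3) := by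
  obtain rfl : w1 = w₁ := hw1
  obtain rfl : w2 = w₂ := hw2
  exact ⟨⟨isInvariantMod_w₁.1, isInvariantMod_w₁.2, isInvariantMod_w₂.1, isInvariantMod_w₂.2⟩,
    fun _ _ => eq_zero_of_smul_w₁_add_smul_w₂_mem_B,
    fun z hE hF => ⟨_, _, sub_smul_w₁_add_smul_w₂_mem_B ⟨hE, hF⟩⟩⟩
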